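/- Let φ : K → K' be a geometric and dense morphism of ⊗-triangulated categories and assume K' is molecular. Let Φ = Spc(φ) : Spc(K') → Spc(K) be the induced map and let V ⊆ Spc(K) be an open subset. Then φ(J(V)) ⊆ J(Φ⁻¹(V)), i.e. for every object x ∈ J(V) one has φ(x) ∈ J(Φ⁻¹(V)). -/

import Mathlib

namespace Balmer

open CategoryTheory CategoryTheory.Limits CategoryTheory.Pretriangulated ZeroObject

universe v u v' u'

variable {K : Type u} [Category.{v} K] [Preadditive K] [HasZeroObject K] [HasShift K ℤ]
  [∀ n : ℤ, (shiftFunctor K n).Additive] [Pretriangulated K] [HasBinaryBiproducts K]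

/-- A `⊗`-thick subcategory of `K` (identified with its set of objects):
a full triangulated subcategory, closed under isomorphisms, translations, cones and
direct summands, which is moreover an ideal for the tensor product on both sides. -/
def IsTensorThick (tensor : K ⥤ K ⥤ K) (S : Set K) : Prop :=
  (0 : K) ∈ S ∧
  (∀ ⦃a b : K⦄, (a ≅ b) → a ∈ S → b ∈ S) ∧
  (∀ a ∈ S, ∀ n : ℤ, (shiftFunctor K n).obj a ∈ S) ∧
  (∀ T ∈ (distTriang K), T.obj₁ ∈ S → T.obj₂ ∈ S → T.obj₃ ∈ S) ∧
  (∀ a b : K, (a ⊞ b) ∈ S → a ∈ S ∧ b ∈ S) ∧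
  (∀ a ∈ S, ∀ b : K, (tensor.obj a).obj b ∈ S ∧ (tensor.obj b).obj a ∈ S)

/-- `⟨D⟩`, the smallest `⊗`-thick subcategory of `K` containing `D`. -/
def tensorSpan (tensor : K ⥤ K ⥤ K) (D : Set K) : Set K :=
  ⋂₀ {S : Set K | IsTensorThick tensor S ∧ D ⊆ S}

/-- A `⊗`-thick subcategory `A` is atomic if whenever `A ⊆ ⟨D⟩` for a collection of
objects `D`, there is some `d ∈ D` with `A ⊆ ⟨d⟩`. -/
def IsAtomic (tensor : K ⥤ K ⥤ K) (A : Set K) : Prop :=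
  IsTensorThick tensor A ∧
    ∀ D : Set K, A ⊆ tensorSpan tensor D → ∃ d ∈ D, A ⊆ tensorSpan tensor {d}

/-- The spectrum `Spc(K,⊗)`: the collection of all nonzero atomic `⊗`-thick
subcategories of `K`. -/
def Spc (tensor : K ⥤ K ⥤ K) : Set (Set K) :=
  {A | IsAtomic tensor A ∧ ∃ a ∈ A, ¬ IsZero a}

/-- The basic subset `U(a) = {B ∈ Spc(K) | B ⊄ ⟨a⟩}`. -/
def SpcU (tensor : K ⥤ K ⥤ K) (a : K) : Set (Set K) :=
  {B ∈ Spc tensor | ¬ B ⊆ tensorSpan tensor {a}}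

/-- The spectrum as a type. -/
abbrev SpcTop (tensor : K ⥤ K ⥤ K) : Type u := {A : Set K // A ∈ Spc tensor}

/-- The topology on `Spc(K,⊗)` having the subsets `U(a)`, `a ∈ K`, as a basis of
open subsets. -/
instance spcTopology (tensor : K ⥤ K ⥤ K) : TopologicalSpace (SpcTop tensor) :=
  TopologicalSpace.generateFrom
    {V : Set (SpcTop tensor) | ∃ a : K, V = {B | ¬ B.1 ⊆ tensorSpan tensor {a}}}

variable {L : Type u'} [Category.{v'} L] [Preadditive L] [HasZeroObject L] [HasShift L ℤ]
  [∀ n : ℤ, (shiftFunctor L n).Additive] [Pretriangulated L] [HasBinaryBiproducts L]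

/-- A morphism `φ` of `⊗`-triangulated categories is geometric if `⟨φ(-)⟩`
commutes with arbitrary intersections of `⊗`-thick subcategories. -/
def IsGeometric (tensorK : K ⥤ K ⥤ K) (tensorL : L ⥤ L ⥤ L) (φ : K ⥤ L) : Prop :=
  ∀ 𝒞 : Set (Set K), (∀ C ∈ 𝒞, IsTensorThick tensorK C) →
    tensorSpan tensorL (φ.obj '' ⋂₀ 𝒞) = ⋂ C ∈ 𝒞, tensorSpan tensorL (φ.obj '' C)

/-- A morphism `φ` of `⊗`-triangulated categories is dense if `⟨φ(K)⟩ = L`. -/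
def IsDense (tensorL : L ⥤ L ⥤ L) (φ : K ⥤ L) : Prop :=
  tensorSpan tensorL (Set.range φ.obj) = Set.univ

/-- The map `Φ = Spc(φ)` underlying a geometric and dense morphism `φ`:
`Φ(C)` is the intersection of all `⊗`-thick subcategories `H ⊆ K` such that
`C ⊆ ⟨φ(H)⟩`. -/
def PhiMap (tensorK : K ⥤ K ⥤ K) (tensorL : L ⥤ L ⥤ L) (φ : K ⥤ L) (C : Set L) : Set K :=
  ⋂₀ {H : Set K | IsTensorThick tensorK H ∧ C ⊆ tensorSpan tensorL (φ.obj '' H)}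

/-- `J(V) = ⟨⋃ of the atomic subcategories outside V⟩`. -/
def Jcat (tensor : K ⥤ K ⥤ K) (V : Set (SpcTop tensor)) : Set K :=
  tensorSpan tensor (⋃ A ∈ {A : SpcTop tensor | A ∉ V}, A.1)

/-- `K` is molecular if every `⊗`-thick subcategory of `K` is generated by the atomic
subcategories it contains. -/
def IsMolecular (tensor : K ⥤ K ⥤ K) : Prop :=
  ∀ B : Set K, IsTensorThick tensor B →
    B = tensorSpan tensor (⋃ A ∈ {A : SpcTop tensor | A.1 ⊆ B}, A.1)


lemma isTensorThick_tensorSpan (tensor : K ⥤ K ⥤ K) (D : Set K) :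
    IsTensorThick tensor (tensorSpan tensor D) := by
  refine ⟨?_, ?_, ?_, ?_, ?_, ?_⟩
  · exact fun S hS => hS.1.1
  · exact fun a b e ha S hS => hS.1.2.1 e (ha S hS)
  · exact fun a ha n S hS => hS.1.2.2.1 a (ha S hS) n
  · exact fun T hT h1 h2 S hS => hS.1.2.2.2.1 T hT (h1 S hS) (h2 S hS)
  · exact fun a b hab =>
      ⟨fun S hS => (hS.1.2.2.2.2.1 a b (hab S hS)).1,
       fun S hS => (hS.1.2.2.2.2.1 a b (hab S hS)).2⟩
  · exact fun a ha b =>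
      ⟨fun S hS => (hS.1.2.2.2.2.2 a (ha S hS) b).1,
       fun S hS => (hS.1.2.2.2.2.2 a (ha S hS) b).2⟩

lemma subset_tensorSpan (tensor : K ⥤ K ⥤ K) (D : Set K) : D ⊆ tensorSpan tensor D :=
  fun _x hx _S hS => hS.2 hx

lemma tensorSpan_subset (tensor : K ⥤ K ⥤ K) {D S : Set K} (hS : IsTensorThick tensor S)
    (hD : D ⊆ S) : tensorSpan tensor D ⊆ S :=
  Set.sInter_subset_of_mem ⟨hS, hD⟩

lemma isTensorThick_Jcat (tensor : K ⥤ K ⥤ K) (V : Set (SpcTop tensor)) :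
    IsTensorThick tensor (Jcat tensor V) :=
  isTensorThick_tensorSpan tensor _

lemma subset_Jcat (tensor : K ⥤ K ⥤ K) {V : Set (SpcTop tensor)} {A : SpcTop tensor}
    (hA : A ∉ V) : A.1 ⊆ Jcat tensor V :=
  fun _a ha => subset_tensorSpan tensor _ (Set.mem_biUnion hA ha)

lemma mem_of_isOpen_of_subset (tensor : K ⥤ K ⥤ K) {V : Set (SpcTop tensor)} (hV : IsOpen V)
    {X Y : SpcTop tensor} (hXY : X.1 ⊆ Y.1) (hX : X ∈ V) : Y ∈ V := by
  induction hV with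
  | basic U hU =>
      obtain ⟨a, rfl⟩ := hU
      exact fun hY => hX (hXY.trans hY)
  | univ => trivial
  | inter U W _ _ ihU ihW => exact ⟨ihU hX.1, ihW hX.2⟩
  | sUnion 𝒰 _ ih =>
      obtain ⟨U, hU𝒰, hXU⟩ := hX
      exact ⟨U, hU𝒰, ih U hU𝒰 hXU⟩

lemma IsTensorThick.preimage {tensorK : K ⥤ K ⥤ K} {tensorL : L ⥤ L ⥤ L}
    (φ : K ⥤ L) [φ.CommShift ℤ] [φ.IsTriangulated]
    (e : ∀ a b : K, φ.obj ((tensorK.obj a).obj b) ≅ (tensorL.obj (φ.obj a)).obj (φ.obj b))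
    {S : Set L} (hS : IsTensorThick tensorL S) : IsTensorThick tensorK (φ.obj ⁻¹' S) := by
  obtain ⟨h0, hiso, hshift, htri, hsum, htens⟩ := hS
  refine ⟨?_, ?_, ?_, ?_, ?_, ?_⟩
  · exact hiso φ.mapZeroObject.symm h0
  · exact fun a b i ha => hiso (φ.mapIso i) ha
  · exact fun a ha n => hiso ((φ.commShiftIso n).symm.app a) (hshift _ ha n)
  · exact fun T hT h1 h2 => htri (φ.mapTriangle.obj T) (φ.map_distinguished T hT) h1 h2
  · intro a b hab
    have : PreservesBinaryBiproducts φ := preservesBinaryBiproducts_of_preservesBiproducts φ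
    exact hsum (φ.obj a) (φ.obj b) (hiso (φ.mapBiprod a b) hab)
  · exact fun a ha b =>
      ⟨hiso (e a b).symm (htens _ ha (φ.obj b)).1, hiso (e b a).symm (htens _ ha (φ.obj b)).2⟩

lemma phiMap_subset (tensorK : K ⥤ K ⥤ K) (tensorL : L ⥤ L ⥤ L) (φ : K ⥤ L) {C : Set L}
    {H : Set K} (hH : IsTensorThick tensorK H) (hC : C ⊆ tensorSpan tensorL (φ.obj '' H)) :
    PhiMap tensorK tensorL φ C ⊆ H :=
  Set.sInter_subset_of_mem ⟨hH, hC⟩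

/-- By molecularity `⟨φ(A)⟩` is generated by the atomic `C` inside it; each such `C` has
`Φ(C) ⊆ A`, so `C ∈ Φ⁻¹(V)` would force `A ∈ V`. -/
lemma tensorSpan_image_subset_Jcat_preimage (tensorK : K ⥤ K ⥤ K) (tensorL : L ⥤ L ⥤ L)
    (φ : K ⥤ L) (hmol : IsMolecular tensorL) (Φ : SpcTop tensorL → SpcTop tensorK)
    (hΦ : ∀ C : SpcTop tensorL, (Φ C).1 = PhiMap tensorK tensorL φ C.1)
    {V : Set (SpcTop tensorK)} (hV : IsOpen V) {A : SpcTop tensorK} (hA : A ∉ V) :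
    tensorSpan tensorL (φ.obj '' A.1) ⊆ Jcat tensorL (Φ ⁻¹' V) := by
  rw [hmol _ (isTensorThick_tensorSpan tensorL _)]
  refine tensorSpan_subset tensorL (isTensorThick_Jcat tensorL _) (Set.iUnion₂_subset ?_)
  intro C hC
  have hΦC : (Φ C).1 ⊆ A.1 := hΦ C ▸ phiMap_subset tensorK tensorL φ A.2.1.1 hC
  exact subset_Jcat tensorL fun hCV => hA (mem_of_isOpen_of_subset tensorK hV hΦC hCV)

/-- Lemma 5.10: if `φ : K ⥤ K'` is geometric (and dense) and `K'` is
molecular, then for each open `V ⊆ Spc(K)` one has `φ(J(V)) ⊆ J(Φ⁻¹(V))`. -/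
theorem stmt12 (tensorK : K ⥤ K ⥤ K) (tensorL : L ⥤ L ⥤ L)
    [∀ a : K, (tensorK.obj a).CommShift ℤ] [∀ a : K, (tensorK.obj a).IsTriangulated]
    [∀ b : K, (tensorK.flip.obj b).CommShift ℤ] [∀ b : K, (tensorK.flip.obj b).IsTriangulated]
    [∀ a : L, (tensorL.obj a).CommShift ℤ] [∀ a : L, (tensorL.obj a).IsTriangulated]
    [∀ b : L, (tensorL.flip.obj b).CommShift ℤ] [∀ b : L, (tensorL.flip.obj b).IsTriangulated]
    (φ : K ⥤ L) [φ.CommShift ℤ] [φ.IsTriangulated]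
    (e : ∀ a b : K, φ.obj ((tensorK.obj a).obj b) ≅ (tensorL.obj (φ.obj a)).obj (φ.obj b))
    (hgeo : IsGeometric tensorK tensorL φ) (hdense : IsDense tensorL φ)
    (hmol : IsMolecular tensorL)
    (Φ : SpcTop tensorL → SpcTop tensorK)
    (hΦ : ∀ C : SpcTop tensorL, (Φ C).1 = PhiMap tensorK tensorL φ C.1)
    (V : Set (SpcTop tensorK)) (hV : IsOpen V) :
    ∀ x ∈ Jcat tensorK V, φ.obj x ∈ Jcat tensorL (Φ ⁻¹' V) := by
  refine fun x hx => tensorSpan_subset tensorK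
    ((isTensorThick_Jcat tensorL _).preimage φ e) (Set.iUnion₂_subset ?_) hx
  intro A hA a ha
  exact tensorSpan_image_subset_Jcat_preimage tensorK tensorL φ hmol Φ hΦ hV hA
    (subset_tensorSpan tensorL _ ⟨a, ha, rfl⟩)

end Balmer
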